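/- The ε-acceptability relation with margin ε > 0 is not transitive in general: there exist endpoint values for models f, f', f'' such that f →_ε f' and f' →_ε f'' but f does not →_ε f''; in particular repeated ε-acceptable updates can produce a model strictly inferior to the original (bio-creep). -/

import Mathlib

def EpsAcceptable {ι : Type*} (ε : ℝ) (u w : ι → ℝ) : Prop :=
  (∀ k, u k - ε ≤ w k) ∧ ∃ k, u k < w k

theorem not_epsAcceptable_of_forall_lt {ι : Type*} {ε : ℝ} {u w : ι → ℝ}
    (h : ∀ k, w k < u k) : ¬ EpsAcceptable ε u w :=
  fun ⟨_, k, hk⟩ => lt_asymm hk (h k)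

theorem epsAcceptable_fin_two_iff {ε : ℝ} {u w : Fin 2 → ℝ} :
    EpsAcceptable ε u w ↔
      (u 0 - ε ≤ w 0 ∧ u 1 - ε ≤ w 1) ∧ (u 0 < w 0 ∨ u 1 < w 1) := by
  simp only [EpsAcceptable, Fin.forall_fin_two, Fin.exists_fin_two]

/-- The `ε`-acceptability relation with margin `ε > 0` is not transitive: for every `ε > 0`
there are endpoint vectors `v₀, v₁, v₂ : Fin 2 → ℝ` with `v₀ →_ε v₁` and `v₁ →_ε v₂` but not
`v₀ →_ε v₂`; moreover `v₂` can be taken strictly inferior to `v₀` in both endpoints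
(bio-creep), where `u →_ε w` means `u k - ε ≤ w k` for all `k` and `u k < w k` for some `k`. -/
theorem acceptability_not_transitive_biocreep :
    ∀ ε : ℝ, 0 < ε →
      ∃ v₀ v₁ v₂ : Fin 2 → ℝ,
        ((∀ k, v₀ k - ε ≤ v₁ k) ∧ (∃ k, v₀ k < v₁ k)) ∧
        ((∀ k, v₁ k - ε ≤ v₂ k) ∧ (∃ k, v₁ k < v₂ k)) ∧
        ¬ ((∀ k, v₀ k - ε ≤ v₂ k) ∧ (∃ k, v₀ k < v₂ k)) ∧
        (∀ k, v₂ k < v₀ k) := by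
  intro ε hε
  suffices ∃ v₀ v₁ v₂ : Fin 2 → ℝ, EpsAcceptable ε v₀ v₁ ∧ EpsAcceptable ε v₁ v₂ ∧
      ¬ EpsAcceptable ε v₀ v₂ ∧ ∀ k, v₂ k < v₀ k from this
  -- Each step loses less than `ε` in one endpoint and gains less than it lost in the other,
  -- so the losses accumulate.
  let v₀ : Fin 2 → ℝ := ![0, 0]
  let v₁ : Fin 2 → ℝ := ![-(ε / 2), ε / 4]
  let v₂ : Fin 2 → ℝ := ![-(ε / 4), -(ε / 2)]
  have step₀₁ : EpsAcceptable ε v₀ v₁ := by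
    rw [epsAcceptable_fin_two_iff]
    simp only [v₀, v₁, Matrix.cons_val_zero, Matrix.cons_val_one]
    constructor <;> [constructor; right] <;> linarith
  have step₁₂ : EpsAcceptable ε v₁ v₂ := by
    rw [epsAcceptable_fin_two_iff]
    simp only [v₁, v₂, Matrix.cons_val_zero, Matrix.cons_val_one]
    constructor <;> [constructor; left] <;> linarith
  have creep : ∀ k, v₂ k < v₀ k := by
    simp only [Fin.forall_fin_two, v₀, v₂, Matrix.cons_val_zero, Matrix.cons_val_one]
    constructor <;> linarith
  exact ⟨v₀, v₁, v₂, step₀₁, step₁₂, not_epsAcceptable_of_forall_lt creep, creep⟩
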